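/- Let 1 < p < ∞ and 1 ≤ s < ∞, and define G : S(ℓ_{ps}) → S(ℓ_s) coordinatewise by G(x)_i = sign(x_i)·|x_i|^p. Then G maps S(ℓ_{ps}) into S(ℓ_s), and for all x, y ∈ S(ℓ_{ps}) with δ = ‖x − y‖_{ps} one has 2^{1−p}·δ^p ≤ ‖G(x) − G(y)‖_s; moreover, if δ ≤ 1 then also ‖G(x) − G(y)‖_s ≤ δ^p + δ^{p/2} + 2(1 − (1 − √δ)^p). -/

import Mathlib

/-!
Write `G a = sign a · |a| ^ p` and work coordinatewise. If `a` and `b` have opposite signs then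
`|G a - G b| = |a| ^ p + |b| ^ p` while `|a - b| = |a| + |b|`, so `|G a - G b|` lies between
`2 ^ (1 - p) |a - b| ^ p` (convexity of `t ^ p`) and `|a - b| ^ p` (superadditivity). If they have
the same sign then `|G a - G b| = ||a| ^ p - |b| ^ p| ≥ |a - b| ^ p`. For the upper bound put
`σ = √δ`: either `|a - b| > σ max (|a|, |b|)`, and `|G a - G b| ≤ (|a - b| / σ) ^ p`, or the
smaller modulus is at least `1 - σ` times the larger, and then
`|G a - G b| ≤ (1 - (1 - σ) ^ p)(|a| ^ p + |b| ^ p)`.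
Raising to the power `s` and summing, `‖(|zᵢ| ^ p)‖_s = ‖z‖_{ps} ^ p`, so the three pieces have
`ℓ_s`-norms at most `δ ^ p`, `σ ^ (-p) δ ^ p = δ ^ (p / 2)` and `2 (1 - (1 - σ) ^ p)`.
-/

noncomputable def signedRpow (p a : ℝ) : ℝ := Real.sign a * |a| ^ p

section Scalar

variable {p a b u v σ : ℝ}

theorem signedRpow_of_nonneg (hp : p ≠ 0) (ha : 0 ≤ a) : signedRpow p a = a ^ p := by
  rcases ha.eq_or_lt with rfl | ha
  · simp [signedRpow, Real.zero_rpow hp]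
  · rw [signedRpow, Real.sign_of_pos ha, abs_of_pos ha, one_mul]

theorem signedRpow_neg (p a : ℝ) : signedRpow p (-a) = -signedRpow p a := by
  simp [signedRpow, Real.sign_neg]

theorem signedRpow_of_nonpos (hp : p ≠ 0) (ha : a ≤ 0) : signedRpow p a = -(-a) ^ p := by
  rw [← signedRpow_of_nonneg hp (neg_nonneg.2 ha), signedRpow_neg, neg_neg]

theorem abs_signedRpow (hp : p ≠ 0) (a : ℝ) : |signedRpow p a| = |a| ^ p := by
  rcases le_total 0 a with ha | ha
  · rw [signedRpow_of_nonneg hp ha, abs_of_nonneg ha, abs_of_nonneg (by positivity)]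
  · rw [signedRpow_of_nonpos hp ha, abs_neg, abs_of_nonpos ha,
      abs_of_nonneg (Real.rpow_nonneg (neg_nonneg.2 ha) p)]

theorem abs_signedRpow_sub_of_mul_nonneg (hp : p ≠ 0) (h : 0 ≤ a * b) :
    |signedRpow p a - signedRpow p b| = |(|a| ^ p - |b| ^ p)| := by
  rcases mul_nonneg_iff.1 h with ⟨ha, hb⟩ | ⟨ha, hb⟩
  · rw [signedRpow_of_nonneg hp ha, signedRpow_of_nonneg hp hb, abs_of_nonneg ha,
      abs_of_nonneg hb]
  · rw [signedRpow_of_nonpos hp ha, signedRpow_of_nonpos hp hb, abs_of_nonpos ha,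
      abs_of_nonpos hb, neg_sub_neg, abs_sub_comm]

theorem abs_signedRpow_sub_of_mul_nonpos (hp : p ≠ 0) (h : a * b ≤ 0) :
    |signedRpow p a - signedRpow p b| = |a| ^ p + |b| ^ p := by
  rcases mul_nonpos_iff.1 h with ⟨ha, hb⟩ | ⟨ha, hb⟩
  · rw [signedRpow_of_nonneg hp ha, signedRpow_of_nonpos hp hb, abs_of_nonneg ha,
      abs_of_nonpos hb, sub_neg_eq_add,
      abs_of_nonneg (add_nonneg (Real.rpow_nonneg ha p) (Real.rpow_nonneg (neg_nonneg.2 hb) p))]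
  · rw [signedRpow_of_nonpos hp ha, signedRpow_of_nonneg hp hb, abs_of_nonpos ha,
      abs_of_nonneg hb, ← neg_add', abs_neg,
      abs_of_nonneg (add_nonneg (Real.rpow_nonneg (neg_nonneg.2 ha) p) (Real.rpow_nonneg hb p))]

theorem abs_sub_of_mul_nonneg (h : 0 ≤ a * b) : |a - b| = |(|a| - |b|)| := by
  rcases mul_nonneg_iff.1 h with ⟨ha, hb⟩ | ⟨ha, hb⟩
  · rw [abs_of_nonneg ha, abs_of_nonneg hb]
  · rw [abs_of_nonpos ha, abs_of_nonpos hb, neg_sub_neg, abs_sub_comm]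

theorem abs_sub_of_mul_nonpos (h : a * b ≤ 0) : |a - b| = |a| + |b| := by
  rcases mul_nonpos_iff.1 h with ⟨ha, hb⟩ | ⟨ha, hb⟩
  · rw [abs_of_nonneg ha, abs_of_nonpos hb, abs_of_nonneg (by linarith)]; ring
  · rw [abs_of_nonpos ha, abs_of_nonneg hb, abs_of_nonpos (by linarith)]; ring

theorem abs_sub_rpow_le_abs_rpow_sub (hp : 1 ≤ p) (hu : 0 ≤ u) (hv : 0 ≤ v) :
    |u - v| ^ p ≤ |u ^ p - v ^ p| := by
  wlog hvu : v ≤ u generalizing u v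
  · rw [abs_sub_comm, abs_sub_comm (u ^ p)]
    exact this hv hu (by linarith)
  have hmono : v ^ p ≤ u ^ p := Real.rpow_le_rpow hv hvu (by linarith)
  have hsuper := Real.add_rpow_le_rpow_add (sub_nonneg.2 hvu) hv hp
  rw [sub_add_cancel] at hsuper
  rw [abs_of_nonneg (sub_nonneg.2 hvu), abs_of_nonneg (sub_nonneg.2 hmono)]
  linarith

theorem two_rpow_one_sub_mul_add_rpow_le (hp : 1 ≤ p) (hu : 0 ≤ u) (hv : 0 ≤ v) :
    (2 : ℝ) ^ (1 - p) * (u + v) ^ p ≤ u ^ p + v ^ p := by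
  lift u to NNReal using hu
  lift v to NNReal using hv
  have h : (u + v : ℝ) ^ p ≤ 2 ^ (p - 1) * (u ^ p + v ^ p) := by
    exact_mod_cast NNReal.rpow_add_le_mul_rpow_add_rpow u v hp
  rw [show 1 - p = -(p - 1) by ring, Real.rpow_neg zero_le_two,
    inv_mul_le_iff₀ (by positivity)]
  exact h

theorem abs_rpow_sub_rpow_le (hp : 1 ≤ p) (hσ : 0 < σ) (hσ1 : σ ≤ 1) (hu : 0 ≤ u)
    (hv : 0 ≤ v) :
    |u ^ p - v ^ p| ≤ (|u - v| / σ) ^ p + (1 - (1 - σ) ^ p) * (u ^ p + v ^ p) := by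
  wlog hvu : v ≤ u generalizing u v
  · rw [abs_sub_comm, abs_sub_comm u, add_comm (u ^ p)]
    exact this hv hu (by linarith)
  have hmono : v ^ p ≤ u ^ p := Real.rpow_le_rpow hv hvu (by linarith)
  have hc : (1 - σ) ^ p ≤ 1 := Real.rpow_le_one (by linarith) (by linarith) (by linarith)
  have hvp : 0 ≤ v ^ p := by positivity
  rw [abs_of_nonneg (sub_nonneg.2 hmono), abs_of_nonneg (sub_nonneg.2 hvu)]
  rcases le_total (u - v) (σ * u) with hnear | hfar
  · have hv' : (1 - σ) * u ≤ v := by linarith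
    have hvp' : (1 - σ) ^ p * u ^ p ≤ v ^ p := by
      rw [← Real.mul_rpow (by linarith) hu]
      exact Real.rpow_le_rpow (by nlinarith) hv' (by linarith)
    have : 0 ≤ ((u - v) / σ) ^ p := by
      have := sub_nonneg.2 hvu; positivity
    nlinarith
  · have hu' : u ^ p ≤ ((u - v) / σ) ^ p :=
      Real.rpow_le_rpow hu ((le_div_iff₀ hσ).2 (by linarith)) (by linarith)
    have : 0 ≤ (1 - (1 - σ) ^ p) * (u ^ p + v ^ p) := by
      have : 0 ≤ u ^ p := by positivity
      apply mul_nonneg <;> linarith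
    linarith

theorem two_rpow_one_sub_mul_abs_sub_rpow_le (hp : 1 ≤ p) (a b : ℝ) :
    (2 : ℝ) ^ (1 - p) * |a - b| ^ p ≤ |signedRpow p a - signedRpow p b| := by
  have hp0 : p ≠ 0 := by positivity
  rcases le_total 0 (a * b) with h | h
  · rw [abs_signedRpow_sub_of_mul_nonneg hp0 h, abs_sub_of_mul_nonneg h]
    have h2 : (2 : ℝ) ^ (1 - p) ≤ 1 :=
      Real.rpow_le_one_of_one_le_of_nonpos one_le_two (by linarith)
    calc (2 : ℝ) ^ (1 - p) * |(|a| - |b|)| ^ p ≤ |(|a| - |b|)| ^ p :=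
          mul_le_of_le_one_left (by positivity) h2
      _ ≤ _ := abs_sub_rpow_le_abs_rpow_sub hp (abs_nonneg a) (abs_nonneg b)
  · rw [abs_signedRpow_sub_of_mul_nonpos hp0 h, abs_sub_of_mul_nonpos h]
    exact two_rpow_one_sub_mul_add_rpow_le hp (abs_nonneg a) (abs_nonneg b)

theorem abs_signedRpow_sub_le (hp : 1 ≤ p) (hσ : 0 < σ) (hσ1 : σ ≤ 1) (a b : ℝ) :
    |signedRpow p a - signedRpow p b| ≤
      |a - b| ^ p + (|a - b| / σ) ^ p + (1 - (1 - σ) ^ p) * (|a| ^ p + |b| ^ p) := by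
  have hp0 : p ≠ 0 := by positivity
  rcases le_total 0 (a * b) with h | h
  · rw [abs_signedRpow_sub_of_mul_nonneg hp0 h, abs_sub_of_mul_nonneg h]
    have := abs_rpow_sub_rpow_le hp hσ hσ1 (abs_nonneg a) (abs_nonneg b)
    have : 0 ≤ |(|a| - |b|)| ^ p := by positivity
    linarith
  · rw [abs_signedRpow_sub_of_mul_nonpos hp0 h, abs_sub_of_mul_nonpos h]
    have := Real.add_rpow_le_rpow_add (abs_nonneg a) (abs_nonneg b) hp
    have hc : (1 - σ) ^ p ≤ 1 := Real.rpow_le_one (by linarith) (by linarith) (by linarith)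
    have : 0 ≤ (1 - (1 - σ) ^ p) * (|a| ^ p + |b| ^ p) :=
      mul_nonneg (by linarith) (by positivity)
    have : 0 ≤ ((|a| + |b|) / σ) ^ p := by positivity
    linarith

end Scalar

section Lp

variable {α : Type*} {p s : ℝ}

theorem memℓp_of_abs_eq_rpow (hp : 0 < p) (hs : 0 < s) {f g : α → ℝ}
    (hf : Memℓp f (ENNReal.ofReal (p * s))) (hfg : ∀ i, |g i| = |f i| ^ p) :
    Memℓp g (ENNReal.ofReal s) := by
  have hps : 0 < p * s := mul_pos hp hs
  have hsum := hf.summable (by rwa [ENNReal.toReal_ofReal hps.le])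
  simp only [ENNReal.toReal_ofReal hps.le, Real.norm_eq_abs] at hsum
  refine memℓp_gen ?_
  simpa only [ENNReal.toReal_ofReal hs.le, Real.norm_eq_abs, hfg, ← Real.rpow_mul (abs_nonneg _)]
    using hsum

theorem norm_eq_rpow_of_abs_apply_eq (hp : 0 < p) (hs : 0 < s)
    {f : lp (fun _ : α => ℝ) (ENNReal.ofReal (p * s))}
    {g : lp (fun _ : α => ℝ) (ENNReal.ofReal s)}
    (hfg : ∀ i, |g i| = |f i| ^ p) : ‖g‖ = ‖f‖ ^ p := by
  have hps : 0 < p * s := mul_pos hp hs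
  have hsum := lp.norm_rpow_eq_tsum (by rwa [ENNReal.toReal_ofReal hs.le]) g
  have hsum' := lp.norm_rpow_eq_tsum (by rwa [ENNReal.toReal_ofReal hps.le]) f
  simp only [ENNReal.toReal_ofReal hs.le, ENNReal.toReal_ofReal hps.le, Real.norm_eq_abs, hfg,
    ← Real.rpow_mul (abs_nonneg _)] at hsum hsum'
  rw [← hsum'] at hsum
  rwa [← Real.rpow_left_inj (lp.norm_nonneg' _) (Real.rpow_nonneg (lp.norm_nonneg' _) _) hs.ne',
    ← Real.rpow_mul (lp.norm_nonneg' _)]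

theorem exists_lp_comp_of_abs_eq_rpow (hp : 0 < p) (hs : 0 < s) {φ : ℝ → ℝ}
    (hφ : ∀ t, |φ t| = |t| ^ p) (f : lp (fun _ : α => ℝ) (ENNReal.ofReal (p * s))) :
    ∃ g : lp (fun _ : α => ℝ) (ENNReal.ofReal s),
      (∀ i, g i = φ (f i)) ∧ ‖g‖ = ‖f‖ ^ p :=
  let g : lp (fun _ : α => ℝ) (ENNReal.ofReal s) :=
    ⟨φ ∘ f, memℓp_of_abs_eq_rpow hp hs (lp.memℓp f) fun i => hφ (f i)⟩
  ⟨g, fun _ => rfl, norm_eq_rpow_of_abs_apply_eq hp hs fun i => hφ (f i)⟩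

theorem exists_lp_abs_rpow (hp : 0 < p) (hs : 0 < s)
    (f : lp (fun _ : α => ℝ) (ENNReal.ofReal (p * s))) :
    ∃ g : lp (fun _ : α => ℝ) (ENNReal.ofReal s),
      (∀ i, g i = |f i| ^ p) ∧ ‖g‖ = ‖f‖ ^ p :=
  exists_lp_comp_of_abs_eq_rpow hp hs (fun t => abs_of_nonneg (by positivity)) f

theorem two_rpow_one_sub_mul_norm_sub_rpow_le (hp : 1 ≤ p) (hs : 0 < s)
    {x y : lp (fun _ : α => ℝ) (ENNReal.ofReal (p * s))}
    {Gx Gy : lp (fun _ : α => ℝ) (ENNReal.ofReal s)}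
    (hGx : ∀ i, Gx i = signedRpow p (x i)) (hGy : ∀ i, Gy i = signedRpow p (y i)) :
    (2 : ℝ) ^ (1 - p) * ‖x - y‖ ^ p ≤ ‖Gx - Gy‖ := by
  have hp0 : 0 < p := by linarith
  obtain ⟨A, hA, hnormA⟩ := exists_lp_abs_rpow hp0 hs (x - y)
  calc (2 : ℝ) ^ (1 - p) * ‖x - y‖ ^ p = ‖(2 : ℝ) ^ (1 - p) • A‖ := by
        rw [lp.norm_const_smul (by simpa using hs), hnormA, Real.norm_of_nonneg (by positivity)]
    _ ≤ ‖Gx - Gy‖ := lp.norm_mono (by simpa using hs) fun i => by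
        simp only [lp.coeFn_smul, lp.coeFn_sub, Pi.smul_apply, Pi.sub_apply, smul_eq_mul, hA, hGx,
          hGy, Real.norm_eq_abs, abs_mul, abs_of_nonneg (by positivity : (0 : ℝ) ≤ 2 ^ (1 - p))]
        rw [abs_of_nonneg (by positivity)]
        exact two_rpow_one_sub_mul_abs_sub_rpow_le hp _ _

theorem norm_sub_le_of_apply_eq_signedRpow (hp : 1 ≤ p) [Fact (1 ≤ ENNReal.ofReal s)]
    {x y : lp (fun _ : α => ℝ) (ENNReal.ofReal (p * s))}
    {Gx Gy : lp (fun _ : α => ℝ) (ENNReal.ofReal s)}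
    (hx : ‖x‖ = 1) (hy : ‖y‖ = 1)
    (hGx : ∀ i, Gx i = signedRpow p (x i)) (hGy : ∀ i, Gy i = signedRpow p (y i))
    (hδ : ‖x - y‖ ≤ 1) :
    ‖Gx - Gy‖ ≤
      ‖x - y‖ ^ p + ‖x - y‖ ^ (p / 2) + 2 * (1 - (1 - √‖x - y‖) ^ p) := by
  have hp0 : 0 < p := by linarith
  have hs : 0 < s := ENNReal.ofReal_pos.1 (zero_lt_one.trans_le Fact.out)
  rcases (lp.norm_nonneg' (x - y)).eq_or_lt with hδ0 | hδ0
  · obtain rfl : x = y := sub_eq_zero.1 (lp.norm_eq_zero_iff.1 hδ0.symm)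
    obtain rfl : Gx = Gy := lp.ext (funext fun i => by rw [hGx, hGy])
    simp [Real.zero_rpow hp0.ne', Real.zero_rpow (half_pos hp0).ne']
  set δ := ‖x - y‖
  set σ := √δ
  set c := 1 - (1 - σ) ^ p
  have hσ : 0 < σ := Real.sqrt_pos.2 hδ0
  have hσ1 : σ ≤ 1 := Real.sqrt_le_one.2 hδ
  obtain ⟨A, hA, hnormA⟩ := exists_lp_abs_rpow hp0 hs (x - y)
  obtain ⟨B, hB, hnormB⟩ := exists_lp_abs_rpow hp0 hs x
  obtain ⟨C, hC, hnormC⟩ := exists_lp_abs_rpow hp0 hs y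
  have hc : 0 ≤ c := sub_nonneg.2 (Real.rpow_le_one (by linarith) (by linarith) hp0.le)
  have hδσ : σ⁻¹ ^ p * δ ^ p = δ ^ (p / 2) := by
    have hσσ : σ * σ = δ := Real.mul_self_sqrt hδ0.le
    rw [← Real.mul_rpow (by positivity) hδ0.le,
      show σ⁻¹ * δ = σ by rw [← hσσ]; field_simp,
      show σ = δ ^ (1 / 2 : ℝ) from Real.sqrt_eq_rpow δ, ← Real.rpow_mul hδ0.le]
    ring_nf
  calc ‖Gx - Gy‖ ≤ ‖A + σ⁻¹ ^ p • A + c • (B + C)‖ :=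
      lp.norm_mono (by simpa using hs) fun i => by
        simp only [lp.coeFn_smul, lp.coeFn_add, lp.coeFn_sub, Pi.smul_apply, Pi.add_apply,
          Pi.sub_apply, smul_eq_mul, hA, hB, hC, hGx, hGy, Real.norm_eq_abs]
        refine (abs_signedRpow_sub_le hp hσ hσ1 _ _).trans (le_of_eq_of_le ?_ (le_abs_self _))
        rw [Real.div_rpow (abs_nonneg _) hσ.le, Real.inv_rpow hσ.le, div_eq_inv_mul]
    _ ≤ ‖A‖ + σ⁻¹ ^ p * ‖A‖ + c * (‖B‖ + ‖C‖) := by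
        refine (norm_add₃_le ..).trans ?_
        rw [norm_smul, norm_smul, Real.norm_of_nonneg (by positivity), Real.norm_of_nonneg hc]
        gcongr
        exact norm_add_le _ _
    _ = δ ^ p + δ ^ (p / 2) + 2 * c := by
        rw [hnormA, hnormB, hnormC, hx, hy, Real.one_rpow, hδσ]; ring

end Lp

theorem p_convexification_map_estimates_general (p s : ℝ) (hp : 1 < p) (hs : 1 ≤ s)
    (x y : lp (fun _ : ℕ => ℝ) (ENNReal.ofReal (p * s)))
    (hx : ‖x‖ = 1) (hy : ‖y‖ = 1) :
    ∃ Gx Gy : lp (fun _ : ℕ => ℝ) (ENNReal.ofReal s),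
      (∀ i, Gx i = Real.sign (x i) * |x i| ^ p) ∧
      (∀ i, Gy i = Real.sign (y i) * |y i| ^ p) ∧
      ‖Gx‖ = 1 ∧ ‖Gy‖ = 1 ∧
      (2 : ℝ) ^ (1 - p) * ‖x - y‖ ^ p ≤ ‖Gx - Gy‖ ∧
      (‖x - y‖ ≤ 1 →
        ‖Gx - Gy‖ ≤ ‖x - y‖ ^ p + ‖x - y‖ ^ (p / 2) +
          2 * (1 - (1 - Real.sqrt ‖x - y‖) ^ p)) := by
  have hp0 : 0 < p := by linarith
  have hs0 : 0 < s := by linarith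
  have : Fact (1 ≤ ENNReal.ofReal s) := ⟨ENNReal.one_le_ofReal.2 hs⟩
  obtain ⟨Gx, hGx, hnormGx⟩ := exists_lp_comp_of_abs_eq_rpow hp0 hs0 (abs_signedRpow hp0.ne') x
  obtain ⟨Gy, hGy, hnormGy⟩ := exists_lp_comp_of_abs_eq_rpow hp0 hs0 (abs_signedRpow hp0.ne') y
  exact ⟨Gx, Gy, hGx, hGy, by rw [hnormGx, hx, Real.one_rpow], by rw [hnormGy, hy, Real.one_rpow],
    two_rpow_one_sub_mul_norm_sub_rpow_le hp.le hs0 hGx hGy,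
    norm_sub_le_of_apply_eq_signedRpow hp.le hx hy hGx hGy⟩

/-- The map `G(x)_i = sign(x_i)·|x_i|^p` sends `S(ℓ_{ps})` into `S(ℓ_s)` and satisfies
`2^{1-p}·δ^p ≤ ‖G x - G y‖_s`, and, for `δ ≤ 1`,
`‖G x - G y‖_s ≤ δ^p + δ^{p/2} + 2(1 - (1 - √δ)^p)`, where `δ = ‖x - y‖_{ps}`. -/
theorem p_convexification_map_estimates (p s : ℝ) (hp : 1 < p) (hs : 1 ≤ s)
    [Fact (1 ≤ ENNReal.ofReal (p * s))] [Fact (1 ≤ ENNReal.ofReal s)]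
    (x y : lp (fun _ : ℕ => ℝ) (ENNReal.ofReal (p * s)))
    (hx : ‖x‖ = 1) (hy : ‖y‖ = 1) :
    ∃ Gx Gy : lp (fun _ : ℕ => ℝ) (ENNReal.ofReal s),
      (∀ i, Gx i = Real.sign (x i) * |x i| ^ p) ∧
      (∀ i, Gy i = Real.sign (y i) * |y i| ^ p) ∧
      ‖Gx‖ = 1 ∧ ‖Gy‖ = 1 ∧
      (2 : ℝ) ^ (1 - p) * ‖x - y‖ ^ p ≤ ‖Gx - Gy‖ ∧
      (‖x - y‖ ≤ 1 →
        ‖Gx - Gy‖ ≤ ‖x - y‖ ^ p + ‖x - y‖ ^ (p / 2) +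
          2 * (1 - (1 - Real.sqrt ‖x - y‖) ^ p)) :=
  p_convexification_map_estimates_general p s hp hs x y hx hy
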